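/- Let X and Y be random vectors in ℝ^d with finite second moments and mean zero, and assume Y = T X where T is a symmetric positive semi-definite d×d matrix. Then the linear map x ↦ Tx is an optimal transport map from the law of X to the law of Y for the quadratic cost: for every coupling γ of the laws of X and Y, E[‖X − TX‖²] ≤ ∫ ‖x − y‖² dγ(x,y). -/

import Mathlib

open MeasureTheory ProbabilityTheory Matrix
open scoped ENNReal NNReal

noncomputable section

abbrev Ed (d : ℕ) := EuclideanSpace ℝ (Fin d)

/-- A coupling of `μ` and `ν`: a measure on the product whose marginals are `μ` and `ν`. -/
def IsCoupling {d : ℕ} (γ : Measure (Ed d × Ed d)) (μ ν : Measure (Ed d)) : Prop :=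
  γ.map Prod.fst = μ ∧ γ.map Prod.snd = ν

/-- Quadratic transport cost of a coupling. -/
def cost2 {d : ℕ} (γ : Measure (Ed d × Ed d)) : ℝ≥0∞ :=
  ∫⁻ p, ENNReal.ofReal (‖p.1 - p.2‖ ^ 2) ∂γ

/-- Squared 2-Wasserstein distance. -/
def W2sq {d : ℕ} (μ ν : Measure (Ed d)) : ℝ≥0∞ :=
  ⨅ (γ : Measure (Ed d × Ed d)) (_ : IsCoupling γ μ ν), cost2 γ

/-- 2-Wasserstein distance. -/
def W2 {d : ℕ} (μ ν : Measure (Ed d)) : ℝ :=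
  Real.sqrt (W2sq μ ν).toReal

/-- Finite second moment. -/
def FiniteSecondMoment {d : ℕ} (μ : Measure (Ed d)) : Prop :=
  ∫⁻ x, ENNReal.ofReal (‖x‖ ^ 2) ∂μ < ⊤

/-- Mean vector of a measure. -/
def meanVec {d : ℕ} (μ : Measure (Ed d)) : Ed d := ∫ x, x ∂μ

/-- Covariance matrix of a measure. -/
def covMatrix {d : ℕ} (μ : Measure (Ed d)) : Matrix (Fin d) (Fin d) ℝ :=
  Matrix.of fun i j => ∫ x, (x i - meanVec μ i) * (x j - meanVec μ j) ∂μ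

/-- Positive semidefinite square root of a matrix (junk value `0` if not psd). -/
def msqrt {d : ℕ} (S : Matrix (Fin d) (Fin d) ℝ) : Matrix (Fin d) (Fin d) ℝ :=
  @dite _ S.PosSemidef (Classical.dec _) (fun h => (h.1.eigenvectorUnitary : Matrix (Fin d) (Fin d) ℝ) *
    diagonal ((RCLike.ofReal : ℝ → ℝ) ∘ Real.sqrt ∘ h.1.eigenvalues) *
    (star h.1.eigenvectorUnitary : Matrix (Fin d) (Fin d) ℝ)) (fun _ => 0)

/-- Standard Gaussian measure on `ℝ^d`. -/
def stdGaussian (d : ℕ) : Measure (Ed d) :=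
  (Measure.pi fun _ : Fin d => gaussianReal 0 1).map (EuclideanSpace.equiv (Fin d) ℝ).symm

/-- Gaussian measure on `ℝ^d` with mean `m` and covariance `S`. -/
def gaussianE {d : ℕ} (m : Ed d) (S : Matrix (Fin d) (Fin d) ℝ) : Measure (Ed d) :=
  (stdGaussian d).map fun x => m + (msqrt S).toEuclideanLin x

/-- Normal approximation: Gaussian with the same mean and covariance as `μ`. -/
def normalApprox {d : ℕ} (μ : Measure (Ed d)) : Measure (Ed d) :=
  gaussianE (meanVec μ) (covMatrix μ)


/-!
The map `A` is the gradient of the convex function `φ x = ⟪x, A x⟫ / 2`, so the coupling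
`x ↦ (x, A x)` attains equality in the Fenchel–Young inequality `⟪x, y⟫ ≤ φ x + φ* y`;
integrating that inequality against any other coupling shows that `(x, A x)` maximises the
correlation `∫ ⟪x, y⟫`. Since `‖x - y‖² = ‖x‖² - 2 ⟪x, y⟫ + ‖y‖²` and the outer terms depend only
on the marginals, maximal correlation is minimal quadratic cost. As `A` need not be invertible,
`φ` is replaced by the form of `A + ε • 1`, whose conjugate is the form of its inverse; this costs
`ε ∫ ‖x‖² / 2`, which vanishes as `ε → 0`.
-/

open scoped RealInnerProductSpace Ring

namespace ContinuousLinearMap.IsPositive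

variable {E : Type*} [NormedAddCommGroup E] [InnerProductSpace ℝ E] {A : E →L[ℝ] E}

lemma two_mul_inner_le (hA : A.IsPositive) (x y : E) :
    2 * ⟪x, A y⟫ ≤ ⟪x, A x⟫ + ⟪y, A y⟫ := by
  have h := hA.inner_nonneg_right (x - y)
  have hsymm : ⟪y, A x⟫ = ⟪x, A y⟫ := by
    rw [← hA.inner_left_eq_inner_right, real_inner_comm]
  simp only [map_sub, inner_sub_left, inner_sub_right, hsymm] at h
  linarith

lemma add_smul_one {ε : ℝ} (hA : A.IsPositive) (hε : 0 ≤ ε) : (A + ε • 1).IsPositive :=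
  hA.add (isPositive_one.smul_of_nonneg hε)

lemma isUnit_add_smul_one [CompleteSpace E] {ε : ℝ} (hA : A.IsPositive) (hε : 0 < ε) :
    IsUnit (A + ε • 1) := by
  refine isUnit_of_forall_le_norm_inner_map _ (Real.toNNReal_pos.mpr hε) fun x => ?_
  have h := hA.inner_nonneg_left x
  have hx : ⟪(A + ε • 1) x, x⟫ = ⟪A x, x⟫ + ε * ‖x‖ ^ 2 := by
    simp [inner_add_left, real_inner_smul_left]
  rw [Real.coe_toNNReal _ hε.le, Real.norm_eq_abs, hx]
  exact (by nlinarith : ‖x‖ ^ 2 * ε ≤ ⟪A x, x⟫ + ε * ‖x‖ ^ 2).trans (le_abs_self _)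

lemma apply_inverse_add_smul_one [CompleteSpace E] {ε : ℝ} (hA : A.IsPositive) (hε : 0 < ε)
    (y : E) : (A + ε • 1) ((A + ε • 1)⁻¹ʳ y) = y :=
  DFunLike.congr_fun (Ring.mul_inverse_cancel _ (hA.isUnit_add_smul_one hε)) y

/-- Fenchel–Young inequality for the quadratic form of `A + ε • 1`, whose convex conjugate is
the quadratic form of its inverse. -/
lemma two_mul_inner_le_add_inverse [CompleteSpace E] {ε : ℝ} (hA : A.IsPositive) (hε : 0 < ε)
    (x y : E) : 2 * ⟪x, y⟫ ≤ ⟪x, (A + ε • 1) x⟫ + ⟪(A + ε • 1)⁻¹ʳ y, y⟫ := by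
  have h := (hA.add_smul_one hε.le).two_mul_inner_le x ((A + ε • 1)⁻¹ʳ y)
  rwa [hA.apply_inverse_add_smul_one hε] at h

lemma inner_inverse_apply_le [CompleteSpace E] {ε : ℝ} (hA : A.IsPositive) (hε : 0 < ε)
    (z : E) : ⟪(A + ε • 1)⁻¹ʳ (A z), A z⟫ ≤ ⟪z, A z⟫ := by
  set v := (A + ε • 1)⁻¹ʳ (A z)
  have hv : A v + ε • v = A z := hA.apply_inverse_add_smul_one hε (A z)
  have hvz : ⟪v, A z⟫ = ⟪z, A v⟫ := by
    rw [← hA.inner_left_eq_inner_right, real_inner_comm]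
  have hvv : ⟪v, A z⟫ = ⟪v, A v⟫ + ε * ‖v‖ ^ 2 := by
    rw [← hv, inner_add_right, real_inner_smul_right, real_inner_self_eq_norm_sq]
  have := hA.two_mul_inner_le z v
  nlinarith [sq_nonneg ‖v‖]

end ContinuousLinearMap.IsPositive

namespace MeasureTheory

section InnerProduct

variable {Ω E : Type*} [MeasurableSpace Ω] {μ : Measure Ω}
  [NormedAddCommGroup E] [InnerProductSpace ℝ E] {F G : Ω → E}

lemma MemLp.integrable_inner (hF : MemLp F 2 μ) (hG : MemLp G 2 μ) :
    Integrable (fun ω => ⟪F ω, G ω⟫) μ :=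
  (L2.integrable_inner (hF.toLp F) (hG.toLp G)).congr <|
    hF.coeFn_toLp.mp <| hG.coeFn_toLp.mono fun _ hG hF => by simp only [hF, hG]

lemma integral_norm_sub_sq (hF : MemLp F 2 μ) (hG : MemLp G 2 μ) :
    ∫ ω, ‖F ω - G ω‖ ^ 2 ∂μ =
      ∫ ω, ‖F ω‖ ^ 2 ∂μ - 2 * ∫ ω, ⟪F ω, G ω⟫ ∂μ + ∫ ω, ‖G ω‖ ^ 2 ∂μ := by
  have hF2 : Integrable (fun ω => ‖F ω‖ ^ 2) μ := hF.norm.integrable_sq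
  have hFG : Integrable (fun ω => 2 * ⟪F ω, G ω⟫) μ := (hF.integrable_inner hG).const_mul 2
  simp_rw [norm_sub_sq_real]
  rw [integral_add (f := fun ω => ‖F ω‖ ^ 2 - 2 * ⟪F ω, G ω⟫) (hF2.sub hFG)
    hG.norm.integrable_sq, integral_sub hF2 hFG, integral_const_mul]

end InnerProduct

lemma MemLp.map_continuousLinearMap {𝕜 E F : Type*} [NontriviallyNormedField 𝕜]
    [NormedAddCommGroup E] [NormedSpace 𝕜 E] [MeasurableSpace E] [OpensMeasurableSpace E]
    [NormedAddCommGroup F] [NormedSpace 𝕜 F] [MeasurableSpace F] [BorelSpace F]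
    [SecondCountableTopology F] {μ : Measure E} {p : ℝ≥0∞} (hμ : MemLp id p μ) (A : E →L[𝕜] F) :
    MemLp id p (μ.map A) :=
  (memLp_map_measure_iff aestronglyMeasurable_id A.measurable.aemeasurable).2
    (hμ.continuousLinearMap_comp A)

/-- Weak Kantorovich duality. -/
lemma integral_le_integral_add_integral_of_le {X Y : Type*} [MeasurableSpace X]
    [MeasurableSpace Y] {γ : Measure (X × Y)} {c : X × Y → ℝ} {f : X → ℝ} {g : Y → ℝ}
    (hc : Integrable c γ) (hf : Integrable f (γ.map Prod.fst))
    (hg : Integrable g (γ.map Prod.snd)) (h : ∀ p, c p ≤ f p.1 + g p.2) :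
    ∫ p, c p ∂γ ≤ ∫ x, f x ∂(γ.map Prod.fst) + ∫ y, g y ∂(γ.map Prod.snd) := by
  have hf' : Integrable (fun p : X × Y => f p.1) γ := hf.comp_measurable measurable_fst
  have hg' : Integrable (fun p : X × Y => g p.2) γ := hg.comp_measurable measurable_snd
  rw [integral_map measurable_fst.aemeasurable hf.1, integral_map measurable_snd.aemeasurable hg.1,
    ← integral_add hf' hg']
  exact integral_mono hc (hf'.add hg') h

end MeasureTheory

namespace ContinuousLinearMap.IsPositive

open MeasureTheory

variable {E : Type*} [NormedAddCommGroup E] [InnerProductSpace ℝ E] [CompleteSpace E]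
  [MeasurableSpace E] [BorelSpace E] [SecondCountableTopology E]
  {μ : Measure E} {A : E →L[ℝ] E} {γ : Measure (E × E)}

lemma two_mul_integral_inner_le (hA : A.IsPositive) (hγ₁ : γ.map Prod.fst = μ)
    (hγ₂ : γ.map Prod.snd = μ.map A) (hμ : MemLp id 2 μ) {ε : ℝ} (hε : 0 < ε) :
    2 * ∫ p, ⟪p.1, p.2⟫ ∂γ ≤ 2 * ∫ x, ⟪x, A x⟫ ∂μ + ε * ∫ x, ‖x‖ ^ 2 ∂μ := by
  have hν : MemLp id 2 (μ.map A) := hμ.map_continuousLinearMap A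
  have hfst : MemLp Prod.fst 2 γ := (hγ₁ ▸ hμ).comp_of_map measurable_fst.aemeasurable
  have hsnd : MemLp Prod.snd 2 γ := (hγ₂ ▸ hν).comp_of_map measurable_snd.aemeasurable
  have hAμ : Integrable (fun x => ⟪x, A x⟫) μ :=
    hμ.integrable_inner (hμ.continuousLinearMap_comp A)
  have hS : Integrable (fun x => ⟪x, (A + ε • 1) x⟫) μ :=
    hμ.integrable_inner (hμ.continuousLinearMap_comp _)
  have hS' : Integrable (fun y => ⟪(A + ε • 1)⁻¹ʳ y, y⟫) (μ.map A) :=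
    (hν.continuousLinearMap_comp _).integrable_inner hν
  have hduality := integral_le_integral_add_integral_of_le
    ((hfst.integrable_inner hsnd).const_mul 2) (hγ₁ ▸ hS) (hγ₂ ▸ hS')
    fun p => hA.two_mul_inner_le_add_inverse hε p.1 p.2
  rw [hγ₁, hγ₂, integral_const_mul] at hduality
  have hconj : ∫ y, ⟪(A + ε • 1)⁻¹ʳ y, y⟫ ∂(μ.map A) ≤ ∫ x, ⟪x, A x⟫ ∂μ := by
    rw [integral_map A.measurable.aemeasurable hS'.1]
    exact integral_mono (hS'.comp_measurable A.measurable) hAμ (hA.inner_inverse_apply_le hε)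
  have hreg : ∫ x, ⟪x, (A + ε • 1) x⟫ ∂μ = ∫ x, ⟪x, A x⟫ ∂μ + ε * ∫ x, ‖x‖ ^ 2 ∂μ := by
    simp only [_root_.add_apply, _root_.smul_apply, one_apply_eq_self, inner_add_right,
      real_inner_smul_right, real_inner_self_eq_norm_sq]
    have hμ2 : Integrable (fun x => ‖x‖ ^ 2) μ := hμ.norm.integrable_sq
    rw [integral_add hAμ (hμ2.const_mul ε), integral_const_mul]
  linarith

lemma integral_inner_le (hA : A.IsPositive) (hγ₁ : γ.map Prod.fst = μ)
    (hγ₂ : γ.map Prod.snd = μ.map A) (hμ : MemLp id 2 μ) :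
    ∫ p, ⟪p.1, p.2⟫ ∂γ ≤ ∫ x, ⟪x, A x⟫ ∂μ := by
  set M := ∫ x, ‖x‖ ^ 2 ∂μ
  have hM : 0 ≤ M := integral_nonneg fun _ => by positivity
  refine le_of_forall_pos_le_add fun δ hδ => ?_
  have h := hA.two_mul_integral_inner_le hγ₁ hγ₂ hμ (ε := 2 * δ / (M + 1)) (by positivity)
  have hεM : 2 * δ / (M + 1) * M ≤ 2 * δ := by
    rw [div_mul_eq_mul_div, div_le_iff₀ (by positivity)]
    nlinarith
  linarith

lemma lintegral_norm_sub_apply_sq_le (hA : A.IsPositive) (hγ₁ : γ.map Prod.fst = μ)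
    (hγ₂ : γ.map Prod.snd = μ.map A) (hμ : MemLp id 2 μ) :
    ∫⁻ x, ENNReal.ofReal (‖x - A x‖ ^ 2) ∂μ ≤ ∫⁻ p, ENNReal.ofReal (‖p.1 - p.2‖ ^ 2) ∂γ := by
  have hid : MemLp (fun x : E => x) 2 μ := hμ
  have hfst : MemLp Prod.fst 2 γ := (hγ₁ ▸ hμ).comp_of_map measurable_fst.aemeasurable
  have hsnd : MemLp Prod.snd 2 γ := (hγ₂ ▸ hμ.map_continuousLinearMap A).comp_of_map
    measurable_snd.aemeasurable
  have hsq : Continuous fun y : E => ‖y‖ ^ 2 := by fun_prop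
  have h₁ : ∫ p, ‖p.1‖ ^ 2 ∂γ = ∫ x, ‖x‖ ^ 2 ∂μ := by
    rw [← hγ₁, integral_map measurable_fst.aemeasurable hsq.aestronglyMeasurable]
  have h₂ : ∫ p, ‖p.2‖ ^ 2 ∂γ = ∫ x, ‖A x‖ ^ 2 ∂μ := by
    rw [← integral_map measurable_snd.aemeasurable hsq.aestronglyMeasurable, hγ₂,
      integral_map A.measurable.aemeasurable hsq.aestronglyMeasurable]
  have hcost : ∫ x, ‖x - A x‖ ^ 2 ∂μ ≤ ∫ p, ‖p.1 - p.2‖ ^ 2 ∂γ := by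
    rw [integral_norm_sub_sq hid (hid.continuousLinearMap_comp A), integral_norm_sub_sq hfst hsnd,
      h₁, h₂]
    linarith [hA.integral_inner_le hγ₁ hγ₂ hμ]
  have hA₀ : Integrable (fun x => ‖x - A x‖ ^ 2) μ :=
    (hid.sub (hid.continuousLinearMap_comp A)).norm.integrable_sq
  have hγ₀ : Integrable (fun p : E × E => ‖p.1 - p.2‖ ^ 2) γ := (hfst.sub hsnd).norm.integrable_sq
  rw [← ofReal_integral_eq_lintegral_ofReal hA₀ (.of_forall fun _ => by positivity),
    ← ofReal_integral_eq_lintegral_ofReal hγ₀ (.of_forall fun _ => by positivity)]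
  exact ENNReal.ofReal_le_ofReal hcost

end ContinuousLinearMap.IsPositive

lemma FiniteSecondMoment.memLp_id {d : ℕ} {μ : Measure (Ed d)} (hμ : FiniteSecondMoment μ) :
    MemLp id 2 μ := by
  refine (memLp_two_iff_integrable_sq_norm aestronglyMeasurable_id).2
    ⟨(continuous_norm.pow 2).aestronglyMeasurable, ?_⟩
  exact (hasFiniteIntegral_iff_ofReal (.of_forall fun _ => by positivity)).2 hμ

theorem psd_linear_map_is_optimal_general {d : ℕ} (μ : Measure (Ed d))
    (hμ : FiniteSecondMoment μ)
    (T : Matrix (Fin d) (Fin d) ℝ) (hT : T.PosSemidef) :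
    ∀ γ : Measure (Ed d × Ed d),
      IsCoupling γ μ (μ.map fun x => T.toEuclideanLin x) →
      ∫⁻ x, ENNReal.ofReal (‖x - T.toEuclideanLin x‖ ^ 2) ∂μ ≤ cost2 γ := by
  rintro γ ⟨hγ₁, hγ₂⟩
  have hA : (LinearMap.toContinuousLinearMap T.toEuclideanLin).IsPositive :=
    Matrix.isPositive_toEuclideanLin_iff.mpr hT
  exact hA.lintegral_norm_sub_apply_sq_le hγ₁ hγ₂ hμ.memLp_id

/-- If `Y = T X` for a symmetric positive semi-definite matrix `T` and mean-zero `X`, then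
`x ↦ T x` is an optimal transport map from the law of `X` to the law of `Y` for quadratic
cost. -/
theorem psd_linear_map_is_optimal {d : ℕ} (μ : Measure (Ed d)) [IsProbabilityMeasure μ]
    (hμ : FiniteSecondMoment μ) (hmean : meanVec μ = 0)
    (T : Matrix (Fin d) (Fin d) ℝ) (hT : T.PosSemidef) :
    ∀ γ : Measure (Ed d × Ed d),
      IsCoupling γ μ (μ.map fun x => T.toEuclideanLin x) →
      ∫⁻ x, ENNReal.ofReal (‖x - T.toEuclideanLin x‖ ^ 2) ∂μ ≤ cost2 γ :=
  psd_linear_map_is_optimal_general μ hμ T hT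

end
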